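/- The family {f_i}_{i=1}^n is L-average smooth, i.e. for all x, y ∈ ℝ^d, (1/n)·∑_{i=1}^n ‖∇f_i(x) − ∇f_i(y)‖₂² ≤ L²·‖x−y‖₂². -/

import Mathlib

open Finset
open scoped RealInnerProductSpace

/-- The `p × p` tridiagonal matrix with diagonal entries `2` except the last one, which is `ξ`,
and `-1` on the sub- and super-diagonal. -/
noncomputable def Tmat (p : ℕ) (ξ : ℝ) : Matrix (Fin p) (Fin p) ℝ :=
  fun j k =>
    if j = k then (if (j : ℕ) = p - 1 then ξ else 2)
    else if (j : ℕ) + 1 = (k : ℕ) ∨ (k : ℕ) + 1 = (j : ℕ) then -1 else 0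

/-- The `d × d` matrix (`d = np`, coordinates indexed by `Fin n × Fin p`) which is zero outside
the `i`-th diagonal `p × p` block, and whose `i`-th diagonal block is `Tmat p ξ`. -/
noncomputable def Amat (n p : ℕ) (ξ : ℝ) (i : Fin n) :
    Matrix (Fin n × Fin p) (Fin n × Fin p) ℝ :=
  fun a b => if a.1 = i ∧ b.1 = i then Tmat p ξ a.2 b.2 else 0

/-- The `d × d` diagonal matrix which is the orthogonal projection onto the coordinates
of the `i`-th block of `p` coordinates. -/
noncomputable def Bmat (n p : ℕ) (i : Fin n) :
    Matrix (Fin n × Fin p) (Fin n × Fin p) ℝ :=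
  fun a b => if a = b ∧ a.1 = i then 1 else 0

/-- The component function
`f_i(x) = ((√n L − nμ)/4) ((1/2)⟨x, A_i x⟩ − ⟨e_{(i−1)p+1}, x⟩) + (nμ/2)⟨x, B_i x⟩`. -/
noncomputable def fComp2 (n p : ℕ) [NeZero p] (L μ ξ : ℝ) (i : Fin n)
    (x : EuclideanSpace ℝ (Fin n × Fin p)) : ℝ :=
  ((Real.sqrt n * L - n * μ) / 4) *
      ((1 / 2) * (∑ a : Fin n × Fin p, ∑ b : Fin n × Fin p, x a * Amat n p ξ i a b * x b)
        - x (i, 0)) +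
    (n * μ / 2) * (∑ a : Fin n × Fin p, ∑ b : Fin n × Fin p, x a * Bmat n p i a b * x b)

/-!
The gradient difference of `f_i` is `H_i (x - y)` for the Hessian `H_i = c A_i + nμ B_i`,
`c = (√n L - nμ)/4`, which is supported on the `i`-th diagonal block, so `H_i = H_i B_i`.
The hypothesis `√n < κ` gives `c ≥ 0` and, since it is equivalent to `n^{1/4} < √κ`, also
`ξ ≤ 2`; then every row of `|H_i|` sums to at most `4c + nμ = √n L`. Schur's test bounds
`‖H_i z‖²` by `n L² ‖B_i z‖²`, and the squared norms `‖B_i z‖²` add up to `‖z‖²`.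
-/

open Matrix

theorem Finset.sum_boole_le_one {α : Type*} [Fintype α] {P : α → Prop} [DecidablePred P]
    (h : ∀ a b, P a → P b → a = b) : ∑ a, (if P a then (1 : ℝ) else 0) ≤ 1 := by
  rw [sum_boole]
  exact_mod_cast card_le_one.mpr fun a ha b hb => h a b (by simpa using ha) (by simpa using hb)

section SchurTest
variable {ι κ : Type*} [Fintype ι] [Fintype κ]

theorem Matrix.sum_sq_mulVec_le_of_abs_sum_le (M : Matrix ι κ ℝ) {R : ℝ} (hR : 0 ≤ R)
    (hrow : ∀ i, ∑ j, |M i j| ≤ R) (hcol : ∀ j, ∑ i, |M i j| ≤ R) (w : κ → ℝ) :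
    ∑ i, (M *ᵥ w) i ^ 2 ≤ R ^ 2 * ∑ j, w j ^ 2 := by
  have hCS (i : ι) : (M *ᵥ w) i ^ 2 ≤ R * ∑ j, |M i j| * w j ^ 2 :=
    calc (M *ᵥ w) i ^ 2 ≤ (∑ j, |M i j|) * ∑ j, |M i j| * w j ^ 2 :=
          sum_sq_le_sum_mul_sum_of_sq_le_mul _ (fun _ _ => abs_nonneg _)
            (fun _ _ => by positivity) fun j _ => by rw [mul_pow, ← mul_assoc, ← sq, sq_abs]
      _ ≤ R * ∑ j, |M i j| * w j ^ 2 := by gcongr; exact hrow i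
  calc ∑ i, (M *ᵥ w) i ^ 2 ≤ ∑ i, R * ∑ j, |M i j| * w j ^ 2 := sum_le_sum fun i _ => hCS i
    _ = R * ∑ j, (∑ i, |M i j|) * w j ^ 2 := by
        rw [← mul_sum, sum_comm]; simp_rw [sum_mul]
    _ ≤ R * ∑ j, R * w j ^ 2 := by gcongr with j; exact hcol j
    _ = R ^ 2 * ∑ j, w j ^ 2 := by rw [← mul_sum]; ring

theorem Matrix.norm_sq_toEuclideanCLM_apply_le_of_abs_sum_le [DecidableEq ι] (M : Matrix ι ι ℝ)
    {R : ℝ} (hR : 0 ≤ R) (hrow : ∀ i, ∑ j, |M i j| ≤ R) (hcol : ∀ j, ∑ i, |M i j| ≤ R)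
    (x : EuclideanSpace ℝ ι) :
    ‖toEuclideanCLM (𝕜 := ℝ) M x‖ ^ 2 ≤ R ^ 2 * ‖x‖ ^ 2 := by
  simpa [EuclideanSpace.norm_sq_eq] using M.sum_sq_mulVec_le_of_abs_sum_le hR hrow hcol x.ofLp

end SchurTest

theorem Matrix.hasGradientAt_inner_toEuclideanCLM_self {ι : Type*} [Fintype ι] [DecidableEq ι]
    {M : Matrix ι ι ℝ} (hM : M.IsHermitian) (x : EuclideanSpace ℝ ι) :
    HasGradientAt (fun x => ⟪x, toEuclideanCLM (𝕜 := ℝ) M x⟫)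
      (2 • toEuclideanCLM (𝕜 := ℝ) M x) x := by
  set T := toEuclideanCLM (𝕜 := ℝ) M
  have hT : (fun x => ⟪x, T x⟫) = T.reApplyInnerSelf := by
    ext y; simp [ContinuousLinearMap.reApplyInnerSelf_apply, real_inner_comm]
  rw [hT, hasGradientAt_iff_hasFDerivAt]
  refine ((isSymmetric_toEuclideanLin_iff.mpr hM).hasStrictFDerivAt_reApplyInnerSelf
    (T := T) x).hasFDerivAt.congr_fderiv ?_
  ext y
  simp

theorem Matrix.sum_sum_mul_mul_eq_inner_toEuclideanCLM {ι : Type*} [Fintype ι] [DecidableEq ι]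
    (M : Matrix ι ι ℝ) (x : EuclideanSpace ℝ ι) :
    ∑ a, ∑ b, x a * M a b * x b = ⟪x, toEuclideanCLM (𝕜 := ℝ) M x⟫ := by
  simp [inner_toEuclideanCLM, dotProduct, mulVec, mul_sum, mul_assoc]

theorem Real.rpow_one_div_four_eq_sqrt_sqrt {x : ℝ} (hx : 0 ≤ x) :
    x ^ ((1 : ℝ) / 4) = Real.sqrt (Real.sqrt x) := by
  rw [Real.sqrt_eq_rpow, Real.sqrt_eq_rpow, ← Real.rpow_mul hx]
  norm_num

theorem abs_add_three_mul_div_add_le_two {s t : ℝ} (ht : 0 ≤ t) (hts : t ≤ s) :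
    |(s + 3 * t) / (s + t)| ≤ 2 := by
  rcases eq_or_lt_of_le (add_nonneg (ht.trans hts) ht) with h | h
  · simp [← h]
  · rw [abs_of_nonneg (div_nonneg (by linarith) h.le), div_le_iff₀ h]
    linarith

theorem Tmat_isSymm (p : ℕ) (ξ : ℝ) : (Tmat p ξ).IsSymm :=
  IsSymm.ext fun j k => by unfold Tmat; grind

theorem abs_Tmat_le {p : ℕ} {ξ : ℝ} (hξ : |ξ| ≤ 2) (j k : Fin p) :
    |Tmat p ξ j k| ≤ 2 * (if k = j then 1 else 0) + (if (j : ℕ) + 1 = k then 1 else 0)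
      + (if (k : ℕ) + 1 = j then 1 else 0) := by
  unfold Tmat
  split_ifs <;> simp_all

theorem sum_abs_Tmat_le {p : ℕ} {ξ : ℝ} (hξ : |ξ| ≤ 2) (j : Fin p) :
    ∑ k, |Tmat p ξ j k| ≤ 4 := by
  have h₁ := sum_boole_le_one (P := fun k : Fin p => (j : ℕ) + 1 = k) fun a b ha hb => by omega
  have h₂ := sum_boole_le_one (P := fun k : Fin p => (k : ℕ) + 1 = j) fun a b ha hb => by omega
  calc ∑ k, |Tmat p ξ j k|
      ≤ ∑ k : Fin p, (2 * (if k = j then 1 else 0) + (if (j : ℕ) + 1 = k then 1 else 0)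
        + (if (k : ℕ) + 1 = j then 1 else 0)) := sum_le_sum fun k _ => abs_Tmat_le hξ j k
    _ ≤ 4 := by simp only [sum_add_distrib, ← mul_sum, sum_ite_eq', mem_univ, if_true]; linarith

section Model

variable {n p : ℕ} {L μ ξ : ℝ}

noncomputable def fComp2Hessian (n p : ℕ) (L μ ξ : ℝ) (i : Fin n) :
    Matrix (Fin n × Fin p) (Fin n × Fin p) ℝ :=
  ((Real.sqrt n * L - n * μ) / 4) • Amat n p ξ i + (n * μ) • Bmat n p i

theorem fComp2Hessian_isSymm (i : Fin n) : (fComp2Hessian n p L μ ξ i).IsSymm := by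
  have hA : (Amat n p ξ i).IsSymm := IsSymm.ext fun a b => by
    simp only [Amat, (Tmat_isSymm p ξ).apply]; grind
  have hB : (Bmat n p i).IsSymm := IsSymm.ext fun a b => by unfold Bmat; grind
  exact (hA.smul _).add (hB.smul _)

theorem fComp2_eq [NeZero p] (i : Fin n) (x : EuclideanSpace ℝ (Fin n × Fin p)) :
    fComp2 n p L μ ξ i x
      = (1 / 2) * ⟪x, toEuclideanCLM (𝕜 := ℝ) (fComp2Hessian n p L μ ξ i) x⟫
      - (Real.sqrt n * L - n * μ) / 4 * ⟪EuclideanSpace.single (i, 0) 1, x⟫ := by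
  simp only [fComp2, fComp2Hessian, sum_sum_mul_mul_eq_inner_toEuclideanCLM, map_add, map_smul,
    _root_.add_apply, _root_.smul_apply, inner_add_right,
    real_inner_smul_right, EuclideanSpace.inner_single_left, map_one]
  ring

theorem hasGradientAt_fComp2 [NeZero p] (i : Fin n) (x : EuclideanSpace ℝ (Fin n × Fin p)) :
    HasGradientAt (fComp2 n p L μ ξ i)
      (toEuclideanCLM (𝕜 := ℝ) (fComp2Hessian n p L μ ξ i) x
        - ((Real.sqrt n * L - n * μ) / 4) • EuclideanSpace.single (i, 0) 1) x := by
  have hQ := hasGradientAt_inner_toEuclideanCLM_self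
    (isHermitian_iff_isSymm.mpr (fComp2Hessian_isSymm (L := L) (μ := μ) (ξ := ξ) i)) x
  have hℓ := (innerSL ℝ (EuclideanSpace.single ((i, 0) : Fin n × Fin p) (1 : ℝ))).hasFDerivAt
    (x := x)
  rw [hasGradientAt_iff_hasFDerivAt] at hQ ⊢
  rw [funext (fComp2_eq (L := L) (μ := μ) (ξ := ξ) i)]
  refine ((hQ.const_mul (1 / 2)).sub (hℓ.const_mul _)).congr_fderiv ?_
  ext y
  simp

theorem gradient_fComp2_sub [NeZero p] (i : Fin n) (x y : EuclideanSpace ℝ (Fin n × Fin p)) :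
    gradient (fComp2 n p L μ ξ i) x - gradient (fComp2 n p L μ ξ i) y
      = toEuclideanCLM (𝕜 := ℝ) (fComp2Hessian n p L μ ξ i) (x - y) := by
  rw [(hasGradientAt_fComp2 i x).gradient, (hasGradientAt_fComp2 i y).gradient, map_sub]
  abel

theorem fComp2Hessian_mul_Bmat (i : Fin n) :
    fComp2Hessian n p L μ ξ i * Bmat n p i = fComp2Hessian n p L μ ξ i := by
  ext a b
  have hmul : (fComp2Hessian n p L μ ξ i * Bmat n p i) a b
      = fComp2Hessian n p L μ ξ i a b * if b.1 = i then 1 else 0 := by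
    simp [mul_apply, Bmat, ite_and]
  rw [hmul]
  by_cases hb : b.1 = i
  · simp [hb]
  · have hA : Amat n p ξ i a b = 0 := if_neg fun h => hb h.2
    have hB : Bmat n p i a b = 0 := if_neg fun ⟨hab, ha⟩ => hb (hab ▸ ha)
    simp [hb, fComp2Hessian, hA, hB]

theorem sum_abs_Amat_le (hξ : |ξ| ≤ 2) (i : Fin n) (a : Fin n × Fin p) :
    ∑ b, |Amat n p ξ i a b| ≤ 4 := by
  by_cases ha : a.1 = i
  · simpa [Amat, ha, Fintype.sum_prod_type, apply_ite] using sum_abs_Tmat_le hξ a.2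
  · simp [Amat, ha]

theorem sum_abs_Bmat_le (i : Fin n) (a : Fin n × Fin p) : ∑ b, |Bmat n p i a b| ≤ 1 := by
  by_cases ha : a.1 = i <;> simp [Bmat, ha, apply_ite]

theorem sum_abs_fComp2Hessian_le (hμ : 0 ≤ μ) (hc : n * μ ≤ Real.sqrt n * L) (hξ : |ξ| ≤ 2)
    (i : Fin n) (a : Fin n × Fin p) : ∑ b, |fComp2Hessian n p L μ ξ i a b| ≤ Real.sqrt n * L := by
  have hnμ : 0 ≤ (n : ℝ) * μ := by positivity
  have hc₀ : 0 ≤ (Real.sqrt n * L - n * μ) / 4 := by linarith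
  calc ∑ b, |fComp2Hessian n p L μ ξ i a b|
      ≤ ∑ b, ((Real.sqrt n * L - n * μ) / 4 * |Amat n p ξ i a b| + n * μ * |Bmat n p i a b|) := by
        refine sum_le_sum fun b _ => (abs_add_le _ _).trans_eq ?_
        simp [abs_mul, abs_of_nonneg hnμ, abs_of_nonneg hc₀]
    _ ≤ (Real.sqrt n * L - n * μ) / 4 * 4 + n * μ * 1 := by
        rw [sum_add_distrib, ← mul_sum, ← mul_sum]
        gcongr
        exacts [sum_abs_Amat_le hξ i a, sum_abs_Bmat_le i a]
    _ = Real.sqrt n * L := by ring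

theorem sum_norm_sq_toEuclideanCLM_Bmat (z : EuclideanSpace ℝ (Fin n × Fin p)) :
    ∑ i, ‖toEuclideanCLM (𝕜 := ℝ) (Bmat n p i) z‖ ^ 2 = ‖z‖ ^ 2 := by
  simp only [EuclideanSpace.norm_sq_eq, ofLp_toEuclideanCLM]
  rw [sum_comm]
  refine sum_congr rfl fun a _ => ?_
  simp [mulVec, dotProduct, Bmat, ite_and, ite_pow]

theorem norm_sq_toEuclideanCLM_fComp2Hessian_le (hμ : 0 ≤ μ) (hc : n * μ ≤ Real.sqrt n * L)
    (hξ : |ξ| ≤ 2) (i : Fin n) (z : EuclideanSpace ℝ (Fin n × Fin p)) :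
    ‖toEuclideanCLM (𝕜 := ℝ) (fComp2Hessian n p L μ ξ i) z‖ ^ 2
      ≤ n * L ^ 2 * ‖toEuclideanCLM (𝕜 := ℝ) (Bmat n p i) z‖ ^ 2 := by
  have hrow := sum_abs_fComp2Hessian_le (p := p) hμ hc hξ i
  have hcol (b : Fin n × Fin p) : ∑ a, |fComp2Hessian n p L μ ξ i a b| ≤ Real.sqrt n * L := by
    simpa only [(fComp2Hessian_isSymm i).apply] using hrow b
  have hR : 0 ≤ Real.sqrt n * L := hc.trans' (by positivity)
  calc ‖toEuclideanCLM (𝕜 := ℝ) (fComp2Hessian n p L μ ξ i) z‖ ^ 2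
      = ‖toEuclideanCLM (𝕜 := ℝ) (fComp2Hessian n p L μ ξ i)
          (toEuclideanCLM (𝕜 := ℝ) (Bmat n p i) z)‖ ^ 2 := by
        rw [← mul_apply_eq_comp, ← map_mul, fComp2Hessian_mul_Bmat]
    _ ≤ (Real.sqrt n * L) ^ 2 * ‖toEuclideanCLM (𝕜 := ℝ) (Bmat n p i) z‖ ^ 2 :=
        norm_sq_toEuclideanCLM_apply_le_of_abs_sum_le _ hR hrow hcol _
    _ = n * L ^ 2 * ‖toEuclideanCLM (𝕜 := ℝ) (Bmat n p i) z‖ ^ 2 := by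
        rw [mul_pow, Real.sq_sqrt n.cast_nonneg]

end Model

theorem stmt3_general (n p : ℕ) (hn : 2 ≤ n) [NeZero p]
    (L μ κ ξ : ℝ) (hμ : 0 < μ) (hκ : κ = L / μ) (hκn : Real.sqrt n < κ)
    (hξ : ξ = (Real.sqrt κ + 3 * (n : ℝ) ^ ((1 : ℝ) / 4)) /
        (Real.sqrt κ + (n : ℝ) ^ ((1 : ℝ) / 4))) :
    ∀ x y : EuclideanSpace ℝ (Fin n × Fin p),
      (1 / (n : ℝ)) *
          ∑ i : Fin n, ‖gradient (fComp2 n p L μ ξ i) x - gradient (fComp2 n p L μ ξ i) y‖ ^ 2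
        ≤ L ^ 2 * ‖x - y‖ ^ 2 := by
  intro x y
  have hc : n * μ ≤ Real.sqrt n * L := by
    have h : Real.sqrt n * μ ≤ L := (le_div_iff₀ hμ).mp (hκ ▸ hκn.le)
    calc (n : ℝ) * μ = Real.sqrt n * (Real.sqrt n * μ) := by
          rw [← mul_assoc, Real.mul_self_sqrt n.cast_nonneg]
      _ ≤ Real.sqrt n * L := by gcongr
  have hξ2 : |ξ| ≤ 2 := by
    rw [hξ, Real.rpow_one_div_four_eq_sqrt_sqrt n.cast_nonneg]
    exact abs_add_three_mul_div_add_le_two (Real.sqrt_nonneg _) (Real.sqrt_le_sqrt hκn.le)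
  have hn0 : (0 : ℝ) < n := Nat.cast_pos.mpr (by omega)
  calc (1 / (n : ℝ)) *
        ∑ i : Fin n, ‖gradient (fComp2 n p L μ ξ i) x - gradient (fComp2 n p L μ ξ i) y‖ ^ 2
      = (1 / (n : ℝ)) * ∑ i, ‖toEuclideanCLM (𝕜 := ℝ) (fComp2Hessian n p L μ ξ i) (x - y)‖ ^ 2 := by
        simp_rw [gradient_fComp2_sub]
    _ ≤ (1 / (n : ℝ)) * ∑ i, n * L ^ 2 * ‖toEuclideanCLM (𝕜 := ℝ) (Bmat n p i) (x - y)‖ ^ 2 := by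
        gcongr with i
        exact norm_sq_toEuclideanCLM_fComp2Hessian_le hμ.le hc hξ2 i _
    _ = L ^ 2 * ‖x - y‖ ^ 2 := by
        rw [← mul_sum, sum_norm_sq_toEuclideanCLM_Bmat]
        field_simp

/-- The family `{f_i}` of the Case (2) hard instance is `L`-average smooth:
`(1/n) ∑ ‖∇f_i(x) − ∇f_i(y)‖² ≤ L² ‖x−y‖²` for all `x, y`. -/
theorem stmt3 (n p : ℕ) (hn : 2 ≤ n) [NeZero p] (hp : 1 ≤ p)
    (L μ κ ξ : ℝ) (hμ : 0 < μ) (hL : 0 < L) (hκ : κ = L / μ) (hκn : Real.sqrt n < κ)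
    (hξ : ξ = (Real.sqrt κ + 3 * (n : ℝ) ^ ((1 : ℝ) / 4)) /
        (Real.sqrt κ + (n : ℝ) ^ ((1 : ℝ) / 4))) :
    ∀ x y : EuclideanSpace ℝ (Fin n × Fin p),
      (1 / (n : ℝ)) *
          ∑ i : Fin n, ‖gradient (fComp2 n p L μ ξ i) x - gradient (fComp2 n p L μ ξ i) y‖ ^ 2
        ≤ L ^ 2 * ‖x - y‖ ^ 2 :=
  stmt3_general n p hn L μ κ ξ hμ hκ hκn hξ
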